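/- arXiv:0809.2166 — 2 statements merged into one kernel-verified Lean document; each statement's English description precedes it below -/
import Mathlib

section
/- Let q = p^d be a prime power and let G be a finite abelian p-group of exponent dividing q. For every symmetric 2-cocycle c : G × G → ℤ/q (i.e. a 2-cocycle with c(σ,τ) = c(τ,σ) for all σ, τ), there exist a group homomorphism ψ : G → ℤ/q, a function ψ̂ : G → ℤ/q² with π ∘ ψ̂ = ψ, and a function f : G → ℤ/q such that c(σ,τ) = χ_{ψ,ψ̂}(σ,τ) + f(σ) + f(τ) − f(στ) for all σ, τ ∈ G. (In cohomological terms: the Bockstein homomorphism β_G maps H¹(G, ℤ/q) onto the subgroup H²(G, ℤ/q)_sym of classes of symmetric 2-cocycles.) -/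
/-- The reduction homomorphism `π : ℤ/q² → ℤ/q`. -/
noncomputable def piHom (q : ℕ) : ZMod (q ^ 2) →+* ZMod q :=
  ZMod.castHom (dvd_pow_self q (by norm_num : (2 : ℕ) ≠ 0)) (ZMod q)

/-- The injective additive map `ι : ℤ/q → ℤ/q²`, `x mod q ↦ qx mod q²`. -/
def iotaMap (q : ℕ) (x : ZMod q) : ZMod (q ^ 2) := (q : ZMod (q ^ 2)) * x.val

/-!
A symmetric 2-cocycle `c` defines an abelian extension `E` of `G` by `ℤ/q`: the set `ℤ/q × G`
with `(a, σ) + (b, τ) = (a + b + c(σ, τ), στ)`. If `G` has exponent dividing `q`, then `E` is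
killed by `q²`, i.e. it is a `ℤ/q²`-module. By Baer's criterion `ℤ/q²` is self-injective, so
`ι : ℤ/q → ℤ/q²` extends along `ℤ/q ↪ E` to `F : E → ℤ/q²`, and `ψ̂(σ) = F(0, σ)` satisfies
`ψ̂(σ) + ψ̂(τ) - ψ̂(στ) = ι(c(σ, τ))`. As `π ∘ ι = 0`, `ψ = π ∘ ψ̂` is a homomorphism, and
`c = χ_{ψ,ψ̂}` on the nose.
-/

open Function

namespace ZMod

theorem mem_span_singleton_of_annihilator {n : ℕ} [NeZero n] {a b : ZMod n}
    (h : ∀ r : ZMod n, r * a = 0 → r * b = 0) : b ∈ Ideal.span {a} := by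
  -- With `m = gcd(a, n)`: `(n / m) * a = 0` forces `m ∣ b`, and `m ∈ (a)` by Bézout.
  set m := a.val.gcd n
  have hmn : m ∣ n := Nat.gcd_dvd_right _ _
  have hk : 0 < n / m :=
    Nat.div_pos (Nat.le_of_dvd (NeZero.pos n) hmn) (Nat.gcd_pos_of_pos_right _ (NeZero.pos n))
  have hkm : n / m * m = n := Nat.div_mul_cancel hmn
  have hkb : ((n / m : ℕ) : ZMod n) * b = 0 := by
    refine h _ ?_
    obtain ⟨s, hs⟩ := Nat.gcd_dvd_left a.val n
    rw [← natCast_zmod_val a, ← Nat.cast_mul, natCast_eq_zero_iff, hs, ← mul_assoc, hkm]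
    exact dvd_mul_right n s
  obtain ⟨t, ht⟩ : m ∣ b.val := by
    rw [← natCast_zmod_val b, ← Nat.cast_mul, natCast_eq_zero_iff] at hkb
    exact Nat.dvd_of_mul_dvd_mul_left hk (by rwa [hkm])
  refine Ideal.mem_span_singleton'.2 ⟨(a.val.gcdA n : ZMod n) * t, ?_⟩
  have hbezout := congrArg (Int.cast : ℤ → ZMod n) (Nat.gcd_eq_gcd_ab a.val n)
  push_cast [natCast_self, natCast_zmod_val] at hbezout
  rw [← natCast_zmod_val b, ht, Nat.cast_mul, hbezout]
  ring

theorem baer_self (n : ℕ) [NeZero n] : Module.Baer (ZMod n) (ZMod n) := by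
  intro I g
  have : IsPrincipalIdealRing (ZMod n) :=
    IsPrincipalIdealRing.of_surjective (Int.castRingHom (ZMod n)) intCast_surjective
  obtain ⟨a, rfl⟩ := (IsPrincipalIdealRing.principal I).principal
  have ha : a ∈ Ideal.span {a} := Ideal.mem_span_singleton_self a
  obtain ⟨y, hy⟩ := Ideal.mem_span_singleton'.1 <| mem_span_singleton_of_annihilator
    (a := a) (b := g ⟨a, ha⟩) fun r hr => by
      rw [← smul_eq_mul, ← map_smul]
      convert g.map_zero
      exact Subtype.ext hr
  refine ⟨LinearMap.mulRight (ZMod n) y, fun x hx => ?_⟩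
  obtain ⟨s, rfl⟩ := Ideal.mem_span_singleton'.1 hx
  have : (⟨s * a, hx⟩ : Ideal.span {a}) = s • ⟨a, ha⟩ := rfl
  rw [this, map_smul, ← hy, LinearMap.mulRight_apply, smul_eq_mul, mul_assoc, mul_comm a]

theorem exists_addMonoidHom_comp_eq {n : ℕ} [NeZero n] {M N : Type*} [AddCommGroup M]
    [AddCommGroup N] (hN : ∀ x : N, n • x = 0) (i : M →+ N) (hi : Injective i)
    (g : M →+ ZMod n) : ∃ F : N →+ ZMod n, F.comp i = g := by
  let := AddCommGroup.zmodModule hN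
  let := AddCommGroup.zmodModule (G := M) fun x => hi (by rw [map_nsmul, hN, map_zero])
  obtain ⟨F, hF⟩ :=
    (baer_self n).extension_property (i.toZModLinearMap n) hi (g.toZModLinearMap n)
  exact ⟨F.toAddMonoidHom, AddMonoidHom.ext fun x => LinearMap.congr_fun hF x⟩

end ZMod

section Extension

variable {G A : Type*} [CommGroup G] [AddCommGroup A]

class IsSymmCocycle (c : G → G → A) : Prop where
  cocycle : ∀ σ τ ρ : G, c σ τ + c (σ * τ) ρ = c τ ρ + c σ (τ * ρ)
  symm : ∀ σ τ : G, c σ τ = c τ σ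

theorem IsSymmCocycle.apply_one_left (c : G → G → A) [IsSymmCocycle c] (τ : G) :
    c 1 τ = c 1 1 := by
  have h := IsSymmCocycle.cocycle (c := c) 1 1 τ
  rw [one_mul, one_mul] at h
  exact add_left_cancel (h.symm.trans (add_comm _ _))

@[ext]
structure CocycleExt (c : G → G → A) where
  fst : A
  snd : G

namespace CocycleExt

variable (c : G → G → A)

-- `c` is not assumed normalised, so the neutral element is `(-c(1, 1), 1)`.
instance : Zero (CocycleExt c) := ⟨⟨-c 1 1, 1⟩⟩
instance : Add (CocycleExt c) := ⟨fun x y => ⟨x.fst + y.fst + c x.snd y.snd, x.snd * y.snd⟩⟩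
instance : Neg (CocycleExt c) := ⟨fun x => ⟨-x.fst - c x.snd x.snd⁻¹ - c 1 1, x.snd⁻¹⟩⟩

@[simp] theorem fst_zero : (0 : CocycleExt c).fst = -c 1 1 := rfl
@[simp] theorem snd_zero : (0 : CocycleExt c).snd = 1 := rfl
@[simp] theorem fst_add (x y : CocycleExt c) : (x + y).fst = x.fst + y.fst + c x.snd y.snd := rfl
@[simp] theorem snd_add (x y : CocycleExt c) : (x + y).snd = x.snd * y.snd := rfl
@[simp] theorem fst_neg (x : CocycleExt c) : (-x).fst = -x.fst - c x.snd x.snd⁻¹ - c 1 1 := rfl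
@[simp] theorem snd_neg (x : CocycleExt c) : (-x).snd = x.snd⁻¹ := rfl

variable [IsSymmCocycle c]

instance : AddCommGroup (CocycleExt c) where
  add_assoc x y z := by
    ext
    · simp only [fst_add, snd_add]
      linear_combination (norm := abel) IsSymmCocycle.cocycle (c := c) x.snd y.snd z.snd
    · exact mul_assoc x.snd y.snd z.snd
  zero_add x := by
    ext
    · simp [IsSymmCocycle.apply_one_left c x.snd]
    · exact one_mul x.snd
  add_zero x := by
    ext
    · simp [IsSymmCocycle.symm (c := c) x.snd, IsSymmCocycle.apply_one_left c x.snd]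
    · exact mul_one x.snd
  neg_add_cancel x := by
    ext
    · simp only [fst_add, fst_neg, snd_neg, fst_zero, IsSymmCocycle.symm (c := c) x.snd⁻¹]
      abel
    · exact inv_mul_cancel x.snd
  add_comm x y := by
    ext
    · simp [IsSymmCocycle.symm (c := c) x.snd, add_comm x.fst]
    · exact mul_comm x.snd y.snd
  nsmul := nsmulRec
  zsmul := zsmulRec

theorem snd_nsmul (n : ℕ) (x : CocycleExt c) : (n • x).snd = x.snd ^ n := by
  induction n with
  | zero => rw [zero_nsmul, pow_zero, snd_zero]
  | succ n ih => rw [succ_nsmul, snd_add, ih, pow_succ]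

def inl : A →+ CocycleExt c where
  toFun a := ⟨a - c 1 1, 1⟩
  map_zero' := by ext <;> simp
  map_add' a b := by
    ext
    · show a + b - c 1 1 = a - c 1 1 + (b - c 1 1) + c 1 1
      abel
    · exact (mul_one 1).symm

@[simp] theorem fst_inl (a : A) : (inl c a).fst = a - c 1 1 := rfl
@[simp] theorem snd_inl (a : A) : (inl c a).snd = 1 := rfl

theorem inl_injective : Injective (inl c) := fun a b h => by
  simpa using congrArg CocycleExt.fst h

theorem eq_inl_of_snd_eq_one {x : CocycleExt c} (hx : x.snd = 1) :
    x = inl c (x.fst + c 1 1) := by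
  ext <;> simp [hx]

theorem mk_zero_add_mk_zero (σ τ : G) :
    (⟨0, σ⟩ + ⟨0, τ⟩ : CocycleExt c) = inl c (c σ τ) + ⟨0, σ * τ⟩ := by
  ext <;> simp [IsSymmCocycle.apply_one_left c]

theorem mul_nsmul_eq_zero {m n : ℕ} (hA : ∀ a : A, m • a = 0) (hG : ∀ g : G, g ^ n = 1)
    (x : CocycleExt c) : (m * n) • x = 0 := by
  rw [mul_comm, mul_nsmul, eq_inl_of_snd_eq_one c ((snd_nsmul c n x).trans (hG _)),
    ← map_nsmul, hA, map_zero]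

end CocycleExt

end Extension

theorem iotaMap_add (q : ℕ) [NeZero q] (a b : ZMod q) :
    iotaMap q (a + b) = iotaMap q a + iotaMap q b := by
  rw [iotaMap, iotaMap, iotaMap, ZMod.val_add, ← mul_add, ← Nat.cast_add, ← Nat.cast_mul,
    ← Nat.cast_mul, ZMod.natCast_eq_natCast_iff, sq]
  exact (Nat.mod_modEq _ q).mul_left' q

def iotaHom (q : ℕ) [NeZero q] : ZMod q →+ ZMod (q ^ 2) :=
  AddMonoidHom.mk' (iotaMap q) (iotaMap_add q)

theorem piHom_iotaMap (q : ℕ) (x : ZMod q) : piHom q (iotaMap q x) = 0 := by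
  rw [iotaMap, map_mul, map_natCast, ZMod.natCast_self, zero_mul]

theorem exists_iotaMap_eq_of_isSymmCocycle {q : ℕ} [NeZero q] {G : Type*} [CommGroup G]
    (hexp : ∀ g : G, g ^ q = 1) (c : G → G → ZMod q) [IsSymmCocycle c] :
    ∃ ψhat : G → ZMod (q ^ 2), ∀ σ τ : G, iotaMap q (c σ τ) = ψhat σ + ψhat τ - ψhat (σ * τ) := by
  have hE : ∀ x : CocycleExt c, (q ^ 2) • x = 0 := fun x => by
    rw [sq]
    exact CocycleExt.mul_nsmul_eq_zero c (fun a => by simp) hexp x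
  obtain ⟨F, hF⟩ := ZMod.exists_addMonoidHom_comp_eq hE _ (CocycleExt.inl_injective c) (iotaHom q)
  refine ⟨fun g => F ⟨0, g⟩, fun σ τ => ?_⟩
  rw [← map_add, CocycleExt.mk_zero_add_mk_zero, map_add, ← AddMonoidHom.comp_apply, hF]
  exact (add_sub_cancel_right _ _).symm

theorem bockstein_onto_symmetric_part_general (p d q : ℕ) (hp : p.Prime)
    (hq : q = p ^ d) (G : Type*) [CommGroup G] (hexp : ∀ g : G, g ^ q = 1)
    (c : G → G → ZMod q)
    (hcocycle : ∀ σ τ ρ : G, c σ τ + c (σ * τ) ρ = c τ ρ + c σ (τ * ρ))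
    (hsymm : ∀ σ τ : G, c σ τ = c τ σ) :
    ∃ (ψ : G →* Multiplicative (ZMod q)) (ψhat : G → ZMod (q ^ 2))
      (χ : G → G → ZMod q) (f : G → ZMod q),
      (∀ g : G, piHom q (ψhat g) = Multiplicative.toAdd (ψ g)) ∧
      (∀ σ τ : G, iotaMap q (χ σ τ) = ψhat σ + ψhat τ - ψhat (σ * τ)) ∧
      (∀ σ τ : G, c σ τ = χ σ τ + f σ + f τ - f (σ * τ)) := by
  have : NeZero q := ⟨hq ▸ pow_ne_zero d hp.ne_zero⟩
  have : IsSymmCocycle c := ⟨hcocycle, hsymm⟩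
  obtain ⟨ψhat, hψhat⟩ := exists_iotaMap_eq_of_isSymmCocycle hexp c
  have hψ (σ τ : G) : piHom q (ψhat (σ * τ)) = piHom q (ψhat σ) + piHom q (ψhat τ) := by
    have h := congrArg (piHom q) (hψhat σ τ)
    rw [piHom_iotaMap, map_sub, map_add] at h
    exact (sub_eq_zero.1 h.symm).symm
  refine ⟨MonoidHom.mk' (fun g => .ofAdd (piHom q (ψhat g))) fun σ τ => congrArg _ (hψ σ τ),
    ψhat, c, 0, fun _ => rfl, hψhat, fun σ τ => ?_⟩
  simp

/-- Let `q = p^d` be a prime power and `G` a finite abelian `p`-group of exponent dividing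
`q`.  Every symmetric 2-cocycle `c : G × G → ℤ/q` is, modulo a 2-coboundary, a Bockstein
2-cocycle `χ_{ψ,ψ̂}` for some homomorphism `ψ : G → ℤ/q` with set-theoretic lift
`ψ̂ : G → ℤ/q²`: the Bockstein `β_G` maps `H¹(G,ℤ/q)` onto `H²(G,ℤ/q)_sym`. -/
theorem bockstein_onto_symmetric_part (p d q : ℕ) (hp : p.Prime) (hd : 0 < d)
    (hq : q = p ^ d) (G : Type*) [CommGroup G] [Finite G] (hexp : ∀ g : G, g ^ q = 1)
    (c : G → G → ZMod q)
    (hcocycle : ∀ σ τ ρ : G, c σ τ + c (σ * τ) ρ = c τ ρ + c σ (τ * ρ))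
    (hsymm : ∀ σ τ : G, c σ τ = c τ σ) :
    ∃ (ψ : G →* Multiplicative (ZMod q)) (ψhat : G → ZMod (q ^ 2))
      (χ : G → G → ZMod q) (f : G → ZMod q),
      (∀ g : G, piHom q (ψhat g) = Multiplicative.toAdd (ψ g)) ∧
      (∀ σ τ : G, iotaMap q (χ σ τ) = ψhat σ + ψhat τ - ψhat (σ * τ)) ∧
      (∀ σ τ : G, c σ τ = χ σ τ + f σ + f τ - f (σ * τ)) :=
  bockstein_onto_symmetric_part_general p d q hp hq G hexp c hcocycle hsymm
end

section
/- Let n be a natural number and let G = (ℤ/2)^n. Every 2-cocycle c : G × G → ℤ/2 (for the trivial action) is cohomologous to a sum of cup-product cocycles: there exist finitely many group homomorphisms ψ₁, …, ψ_m, ψ'₁, …, ψ'_m : G → ℤ/2 and a function f : G → ℤ/2 such that c(σ,τ) = Σ_{i=1}^{m} ψᵢ(σ)·ψ'ᵢ(τ) + f(σ) + f(τ) − f(στ) for all σ, τ ∈ G. (In cohomological terms: H²(G, ℤ/2) equals its decomposable part H²_dec(G), the subgroup generated by cup products of elements of H¹(G, ℤ/2).) -/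
/-!
The commutator pairing `γ(s, t) = c(s, t) - c(t, s)` of a 2-cocycle on an abelian group is
biadditive, and the cocycle identity shows that, for `σ = p σ + q σ` split along two additive
maps, `c(σ, τ) ≡ c(p σ, p τ) + c(q σ, q τ) + γ(q σ, p τ)` modulo coboundaries. Splitting
`(ℤ/2)ⁿ` off one coordinate at a time therefore reduces `c` to biadditive pairings, which over
`ℤ/2` are sums of products of homomorphisms, and to cocycles on a single copy of `ℤ/2`, which are
`(x, y) ↦ x y k + const`; constants are coboundaries.
-/

open Finset

def IsTwoCocycle {G A : Type*} [Add G] [Add A] (c : G → G → A) : Prop :=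
  ∀ σ τ ρ, c σ τ + c (σ + τ) ρ = c τ ρ + c σ (τ + ρ)

namespace TwoCochain

section Coboundaries

variable (G A : Type*) [AddCommGroup G] [AddCommGroup A]

def coboundaryHom : (G → A) →+ (G → G → A) :=
  AddMonoidHom.mk' (fun f σ τ => f σ + f τ - f (σ + τ)) fun f g => by
    ext σ τ
    simp only [Pi.add_apply]
    abel

@[simp]
theorem coboundaryHom_apply (f : G → A) (σ τ : G) :
    coboundaryHom G A f σ τ = f σ + f τ - f (σ + τ) :=
  rfl

def coboundaries : AddSubgroup (G → G → A) := (coboundaryHom G A).range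

variable {G A}

theorem const_mem_coboundaries (K : A) : (fun _ _ => K : G → G → A) ∈ coboundaries G A :=
  ⟨fun _ => K, by ext; simp⟩

end Coboundaries

section Decomposable

variable (G R : Type*) [AddCommGroup G] [Ring R]

/-- Cochain-level counterpart of `H²_dec`. -/
def decomposable : AddSubgroup (G → G → R) where
  carrier := {d | ∃ (m : ℕ) (ψ ψ' : Fin m → (G →+ R)), ∀ σ τ, d σ τ = ∑ i, ψ i σ * ψ' i τ}
  zero_mem' := ⟨0, finZeroElim, finZeroElim, by simp⟩
  add_mem' := by
    rintro d d' ⟨m, ψ, ψ', hd⟩ ⟨m', φ, φ', hd'⟩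
    refine ⟨m + m', Fin.append ψ φ, Fin.append ψ' φ', fun σ τ => ?_⟩
    simp [Fin.sum_univ_add, hd, hd']
  neg_mem' := by
    rintro d ⟨m, ψ, ψ', hd⟩
    exact ⟨m, -ψ, ψ', fun σ τ => by simp [hd]⟩

variable {G R}

theorem cup_mem_decomposable (ψ ψ' : G →+ R) :
    (fun σ τ => ψ σ * ψ' τ) ∈ decomposable G R :=
  ⟨1, fun _ => ψ, fun _ => ψ', by simp⟩

end Decomposable

theorem biadditive_mem_decomposable {ι : Type*} [Fintype ι] [DecidableEq ι] {p : ℕ}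
    (B : (ι → ZMod p) →+ (ι → ZMod p) →+ ZMod p) :
    (fun σ τ => B σ τ) ∈ decomposable (ι → ZMod p) (ZMod p) := by
  have expand : (fun σ τ => B σ τ) = ∑ k, fun σ τ => σ k * B (Pi.single k 1) τ := by
    ext σ τ
    conv_lhs => rw [pi_eq_sum_univ' σ]
    simp [ZMod.map_smul]
  rw [expand]
  exact AddSubgroup.sum_mem _ fun k _ =>
    cup_mem_decomposable (Pi.evalAddMonoidHom _ k) (B (Pi.single k 1))

end TwoCochain

open TwoCochain

namespace IsTwoCocycle

variable {G H A : Type*} [AddCommGroup G] [AddCommGroup H] [AddCommGroup A] {c : G → G → A}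

theorem comp (hc : IsTwoCocycle c) (φ : H →+ G) : IsTwoCocycle fun x y => c (φ x) (φ y) := by
  intro σ τ ρ
  simpa only [map_add] using hc (φ σ) (φ τ) (φ ρ)

theorem zero_left (hc : IsTwoCocycle c) (σ : G) : c 0 σ = c 0 0 := by
  simpa using (hc 0 0 σ).symm

theorem zero_right (hc : IsTwoCocycle c) (σ : G) : c σ 0 = c 0 0 := by
  simpa using hc σ 0 0

theorem commutator_add_left (hc : IsTwoCocycle c) (s s' t : G) :
    c (s + s') t - c t (s + s') = (c s t - c t s) + (c s' t - c t s') := by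
  have h₁ := hc s s' t
  have h₂ := hc s t s'
  have h₃ := hc t s s'
  rw [add_comm t s'] at h₂
  rw [add_comm t s] at h₃
  linear_combination (norm := abel) h₁ - h₂ + h₃

theorem commutator_add_right (hc : IsTwoCocycle c) (s t t' : G) :
    c s (t + t') - c (t + t') s = (c s t - c t s) + (c s t' - c t' s) := by
  linear_combination (norm := abel) -hc.commutator_add_left t t' s

def commutatorHom (hc : IsTwoCocycle c) : G →+ G →+ A :=
  AddMonoidHom.mk'
    (fun s => AddMonoidHom.mk' (fun t => c s t - c t s) (hc.commutator_add_right s))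
    fun s s' => AddMonoidHom.ext (hc.commutator_add_left s s')

@[simp]
theorem commutatorHom_apply (hc : IsTwoCocycle c) (s t : G) :
    hc.commutatorHom s t = c s t - c t s :=
  rfl

theorem apply_add_add (hc : IsTwoCocycle c) (p s q t : G) :
    c (p + s) (q + t) =
      (c s q - c q s) + c p q + c s t + (c (p + q) (s + t) - c p s - c q t) := by
  have h₁ := hc (p + s) q t
  have h₂ := hc (p + q) s t
  have h₃ := hc p s q
  have h₄ := hc p q s
  rw [add_right_comm p q s] at h₂
  rw [add_comm q s] at h₄
  linear_combination (norm := abel) -h₁ + h₂ + h₃ - h₄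

theorem comp_add (hc : IsTwoCocycle c) (p q : H →+ G) :
    (fun σ τ => c ((p + q) σ) ((p + q) τ)) =
      (fun σ τ => hc.commutatorHom (q σ) (p τ)) + (fun σ τ => c (p σ) (p τ)) +
        (fun σ τ => c (q σ) (q τ)) + coboundaryHom H A (fun σ => -c (p σ) (q σ)) := by
  ext σ τ
  simp only [AddMonoidHom.add_apply, Pi.add_apply, map_add, commutatorHom_apply,
    coboundaryHom_apply]
  rw [hc.apply_add_add]
  abel

theorem apply_of_zmod_two {c : ZMod 2 → ZMod 2 → ZMod 2} (hc : IsTwoCocycle c) (x y : ZMod 2) :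
    c x y = x * y * (c 1 1 - c 0 0) + c 0 0 := by
  obtain rfl | rfl : x = 0 ∨ x = 1 := by decide +revert
  all_goals obtain rfl | rfl : y = 0 ∨ y = 1 := by decide +revert
  all_goals simp [hc.zero_left, hc.zero_right]

end IsTwoCocycle

section ElementaryAbelian

variable {ι : Type*} [DecidableEq ι]

def coordProj (R : Type*) [AddCommMonoid R] (s : Finset ι) : (ι → R) →+ (ι → R) :=
  ∑ i ∈ s, (AddMonoidHom.single _ i).comp (Pi.evalAddMonoidHom _ i)

theorem coordProj_insert (R : Type*) [AddCommMonoid R] {s : Finset ι} {i : ι} (hi : i ∉ s) :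
    coordProj R (insert i s) =
      (AddMonoidHom.single _ i).comp (Pi.evalAddMonoidHom _ i) + coordProj R s :=
  sum_insert hi

theorem coordProj_univ [Fintype ι] (R : Type*) [AddCommMonoid R] :
    coordProj R (univ : Finset ι) = .id _ := by
  refine AddMonoidHom.ext fun σ => ?_
  simpa [coordProj] using Finset.univ_sum_single σ

variable {c : (ι → ZMod 2) → (ι → ZMod 2) → ZMod 2}

theorem IsTwoCocycle.comp_single_mem (hc : IsTwoCocycle c) (i : ι) :
    (fun σ τ => c (Pi.single i (σ i)) (Pi.single i (τ i))) ∈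
      decomposable (ι → ZMod 2) (ZMod 2) ⊔ coboundaries (ι → ZMod 2) (ZMod 2) := by
  set k := c (Pi.single i 1) (Pi.single i 1) - c 0 0
  have split : (fun σ τ : ι → ZMod 2 => c (Pi.single i (σ i)) (Pi.single i (τ i))) =
      (fun σ τ => σ i * τ i * k) + fun _ _ => c 0 0 := by
    ext σ τ
    simpa using (hc.comp (AddMonoidHom.single _ i)).apply_of_zmod_two (σ i) (τ i)
  rw [split]
  refine add_mem (AddSubgroup.mem_sup_left ?_)
    (AddSubgroup.mem_sup_right (const_mem_coboundaries _))
  simpa [mul_assoc] using cup_mem_decomposable (Pi.evalAddMonoidHom (fun _ => ZMod 2) i)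
    ((AddMonoidHom.mulRight k).comp (Pi.evalAddMonoidHom (fun _ => ZMod 2) i))

theorem IsTwoCocycle.mem_decomposable_sup_coboundaries [Fintype ι] (hc : IsTwoCocycle c) :
    c ∈ decomposable (ι → ZMod 2) (ZMod 2) ⊔ coboundaries (ι → ZMod 2) (ZMod 2) := by
  suffices ∀ s : Finset ι, (fun σ τ => c (coordProj _ s σ) (coordProj _ s τ)) ∈
      decomposable (ι → ZMod 2) (ZMod 2) ⊔ coboundaries (ι → ZMod 2) (ZMod 2) by
    simpa [coordProj_univ] using this univ
  intro s
  induction s using Finset.induction_on with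
  | empty => simpa [coordProj] using AddSubgroup.mem_sup_right (const_mem_coboundaries (c 0 0))
  | insert i s hi ih =>
    rw [coordProj_insert _ hi, hc.comp_add]
    refine add_mem (add_mem (add_mem ?_ (hc.comp_single_mem i)) ih)
      (AddSubgroup.mem_sup_right ⟨_, rfl⟩)
    exact AddSubgroup.mem_sup_left <| biadditive_mem_decomposable <|
      (hc.commutatorHom.comp (coordProj _ s)).compl₂
        ((AddMonoidHom.single _ i).comp (Pi.evalAddMonoidHom _ i))

end ElementaryAbelian

/-- Let `G = (ℤ/2)ⁿ`.  Every 2-cocycle `c : G × G → ℤ/2` (trivial action) is cohomologous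
to a finite sum of cup-product cocycles `(σ,τ) ↦ ψᵢ(σ)ψ'ᵢ(τ)`: the group `H²(G, ℤ/2)`
equals its decomposable part `H²_dec(G)`. -/
theorem H2_equals_decomposable_q_two (n : ℕ)
    (c : (Fin n → ZMod 2) → (Fin n → ZMod 2) → ZMod 2)
    (hcocycle : ∀ σ τ ρ : Fin n → ZMod 2, c σ τ + c (σ + τ) ρ = c τ ρ + c σ (τ + ρ)) :
    ∃ (m : ℕ) (ψ ψ' : Fin m → ((Fin n → ZMod 2) →+ ZMod 2))
      (f : (Fin n → ZMod 2) → ZMod 2),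
      ∀ σ τ : Fin n → ZMod 2,
        c σ τ = (∑ i, ψ i σ * ψ' i τ) + f σ + f τ - f (σ + τ) := by
  obtain ⟨d, ⟨m, ψ, ψ', hd⟩, b, ⟨f, rfl⟩, rfl⟩ :=
    AddSubgroup.mem_sup.1 (IsTwoCocycle.mem_decomposable_sup_coboundaries hcocycle)
  exact ⟨m, ψ, ψ', f, fun σ τ => by simp only [Pi.add_apply, coboundaryHom_apply, hd]; abel⟩
end
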